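/- arXiv:1005.2629 — 6 statements merged into one kernel-verified Lean document; each statement's English description precedes it below -/
import Mathlib

section
/- Let G be a graph that is not a star and H a graph with minimum degree at least 2. Then for every natural number n, the spectrum S(n;G,H) is an interval of integers: if k1, k2 ∈ S(n;G,H) and k1 ≤ k ≤ k2, then k ∈ S(n;G,H). -/
/-!
Walk from a good colouring `c` to the colouring in which each edge `{i < j}` gets colour `i`
(which uses `n - 1` colours), changing the number of colours by at most one per step; a discrete
intermediate value argument then gives every count between `#colours(c)` and `n - 1`. Vertices
`s = 0, 1, …` are processed in turn: the edges from `s` upward take the star colour of `s`, one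
`c`-colour class at a time, and only for colours of `c` used on no edge beyond `s`; the rest keep
their `c`-colour. Every step stays good. A monochromatic subgraph in a star colour is a star. In a
copy of `H`, if the lowest vertex is already processed, its two edges (`δ(H) ≥ 2`) share a star
colour; otherwise two edges with equal `c`-colour still share a colour.
-/

open SimpleGraph Finset

universe u v

variable {α : Type u} {β : Type v}

/-- The set of colors used on (non-loop) edges of `K_n` by an edge-coloring `c`. -/
def edgeColors {n : ℕ} (c : Sym2 (Fin n) → ℕ) : Finset ℕ :=
  (Finset.univ.filter fun e : Sym2 (Fin n) => ¬ e.IsDiag).image c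

/-- `c` contains a monochromatic copy of `G`. -/
def HasMonoCopy {n : ℕ} (c : Sym2 (Fin n) → ℕ) (G : SimpleGraph α) : Prop :=
  ∃ f : α ↪ Fin n, ∃ k : ℕ, ∀ u v : α, G.Adj u v → c s(f u, f v) = k

/-- `c` contains a rainbow (totally multicolored) copy of `H`. -/
def HasRainbowCopy {n : ℕ} (c : Sym2 (Fin n) → ℕ) (H : SimpleGraph β) : Prop :=
  ∃ f : β ↪ Fin n, ∀ u v u' v' : β, H.Adj u v → H.Adj u' v' →
    c s(f u, f v) = c s(f u', f v') → s(u, v) = s(u', v')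

/-- A `(G,H)`-good coloring: no monochromatic `G` and no rainbow `H`. -/
def GoodColoring {n : ℕ} (c : Sym2 (Fin n) → ℕ) (G : SimpleGraph α) (H : SimpleGraph β) : Prop :=
  ¬ HasMonoCopy c G ∧ ¬ HasRainbowCopy c H

/-- The mixed-Ramsey mixedSpectrum `S(n; G, H)`. -/
def mixedSpectrum (n : ℕ) (G : SimpleGraph α) (H : SimpleGraph β) : Set ℕ :=
  {k | ∃ c : Sym2 (Fin n) → ℕ, GoodColoring c G H ∧ (edgeColors c).card = k}

/-- `G` is a star: all edges share a common vertex. -/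
def IsStar (G : SimpleGraph α) : Prop :=
  ∃ v : α, ∀ u w : α, G.Adj u w → u = v ∨ w = v

/-- `K_3 + e`: a triangle `0,1,2` with a pendant edge `0-3`. -/
def K3e : SimpleGraph (Fin 4) := fromEdgeSet {s(0,1), s(0,2), s(1,2), s(0,3)}

/-- The 4-cycle `C_4`. -/
def C4g : SimpleGraph (Fin 4) := fromEdgeSet {s(0,1), s(1,2), s(2,3), s(3,0)}

/-- The matching `ℓK_2`. -/
def matchingGraph (ℓ : ℕ) : SimpleGraph (Fin ℓ × Fin 2) := fromRel (fun a b => a.1 = b.1)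

/-- The star `K_{1,ℓ}`. -/
def starGraph (ℓ : ℕ) : SimpleGraph (Fin (ℓ+1)) := fromRel (fun a _ => a = 0)

/-- The cycle `C_m` on `ZMod m`. -/
def cycGraph (m : ℕ) : SimpleGraph (ZMod m) := fromRel (fun a b => a = b + 1)

theorem Relation.ReflTransGen.exists_eq_of_mem_uIcc {σ : Type*} {r : σ → σ → Prop}
    {g : σ → ℕ} (hg : ∀ a b, r a b → g b ≤ g a + 1 ∧ g a ≤ g b + 1) {x y : σ}
    (hxy : Relation.ReflTransGen r x y) {k : ℕ} (hk : k ∈ Set.uIcc (g x) (g y)) :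
    ∃ z, Relation.ReflTransGen r x z ∧ g z = k := by
  induction hxy with
  | refl => exact ⟨x, .refl, by simp at hk; exact hk.symm⟩
  | @tail y z hxy hyz ih =>
    by_cases hky : k ∈ Set.uIcc (g x) (g y)
    · exact ih hky
    · have := hg y z hyz
      rw [Set.mem_uIcc] at hk hky
      exact ⟨z, hxy.tail hyz, by omega⟩

section Recoloring

variable {n : ℕ}

lemma mem_edgeColors {c : Sym2 (Fin n) → ℕ} {x : ℕ} :
    x ∈ edgeColors c ↔ ∃ e : Sym2 (Fin n), ¬ e.IsDiag ∧ c e = x := by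
  simp [edgeColors]

lemma edgeColors_subset_insert {c c' : Sym2 (Fin n) → ℕ} {b : ℕ}
    (h : ∀ e : Sym2 (Fin n), ¬ e.IsDiag → c' e = c e ∨ c' e = b) :
    edgeColors c' ⊆ insert b (edgeColors c) := by
  intro x hx
  obtain ⟨e, hd, rfl⟩ := mem_edgeColors.mp hx
  rcases h e hd with h' | h'
  · exact mem_insert_of_mem (mem_edgeColors.mpr ⟨e, hd, h'.symm⟩)
  · exact h' ▸ mem_insert_self _ _

lemma card_edgeColors_le_succ {c c' : Sym2 (Fin n) → ℕ} {b : ℕ}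
    (h : ∀ e : Sym2 (Fin n), ¬ e.IsDiag → c' e = c e ∨ c' e = b) :
    #(edgeColors c') ≤ #(edgeColors c) + 1 :=
  (card_le_card (edgeColors_subset_insert h)).trans (card_insert_le _ _)

def minVertex (e : Sym2 (Fin n)) : ℕ :=
  Sym2.lift ⟨fun a b => min a.val b.val, fun _ _ => min_comm _ _⟩ e

@[simp]
lemma minVertex_mk (a b : Fin n) : minVertex s(a, b) = min a.val b.val := rfl

lemma minVertex_add_one_lt {e : Sym2 (Fin n)} (hd : ¬ e.IsDiag) : minVertex e + 1 < n := by
  induction e using Sym2.ind with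
  | _ a b =>
    have : a.val ≠ b.val := fun h => hd (Sym2.mk_isDiag_iff.mpr (Fin.val_injective h))
    have := a.isLt
    have := b.isLt
    simp only [minVertex_mk]
    omega

variable (c : Sym2 (Fin n) → ℕ)

-- Star colours are even and the kept colours of `c` are shifted to odd ones, so they never collide.
def starRecolor (s : ℕ) (B : Finset ℕ) (e : Sym2 (Fin n)) : ℕ :=
  if minVertex e < s ∨ (minVertex e = s ∧ c e ∈ B) then 2 * minVertex e else 2 * c e + 1

def privateColors (s : ℕ) : Finset ℕ :=
  (edgeColors c).filter fun b => ∀ e : Sym2 (Fin n), ¬ e.IsDiag → s < minVertex e → c e ≠ b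

-- A state `(s, B)` stands for the colouring `starRecolor c s B`.
inductive RecolorStep : ℕ × Finset ℕ → ℕ × Finset ℕ → Prop
  | absorb {s : ℕ} {B : Finset ℕ} {b : ℕ} (hb : b ∈ privateColors c s) :
      RecolorStep (s, B) (s, insert b B)
  | advance (s : ℕ) : RecolorStep (s, privateColors c s) (s + 1, ∅)

lemma starRecolor_of_lt {s : ℕ} {B : Finset ℕ} {e : Sym2 (Fin n)} (he : minVertex e < s) :
    starRecolor c s B e = 2 * minVertex e :=
  if_pos (Or.inl he)

lemma starRecolor_zero_empty : starRecolor c 0 ∅ = fun e => 2 * c e + 1 := by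
  funext e
  exact if_neg (by simp)

lemma card_edgeColors_starRecolor_zero_empty :
    #(edgeColors (starRecolor c 0 ∅)) = #(edgeColors c) := by
  rw [starRecolor_zero_empty, edgeColors, edgeColors,
    show (fun e => 2 * c e + 1) = (fun m => 2 * m + 1) ∘ c from rfl, ← image_image]
  exact card_image_of_injective _ fun a b h => by omega

lemma edgeColors_starRecolor_of_le {s : ℕ} (B : Finset ℕ) (hs : n ≤ s) :
    edgeColors (starRecolor c s B) = (range (n - 1)).image (2 * ·) := by
  ext x
  rw [mem_edgeColors, mem_image]
  constructor
  · rintro ⟨e, hd, rfl⟩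
    have := minVertex_add_one_lt hd
    exact ⟨minVertex e, mem_range.mpr (by omega), (starRecolor_of_lt c (by omega)).symm⟩
  · rintro ⟨i, hi, rfl⟩
    rw [mem_range] at hi
    refine ⟨s(⟨i, by omega⟩, ⟨n - 1, by omega⟩), fun h => ?_, ?_⟩
    · have := Fin.val_eq_of_eq (Sym2.mk_isDiag_iff.mp h)
      simp only at this
      omega
    · rw [starRecolor_of_lt c (by simp; omega)]
      simp only [minVertex_mk]
      omega

lemma card_edgeColors_starRecolor_of_le {s : ℕ} (B : Finset ℕ) (hs : n ≤ s) :
    #(edgeColors (starRecolor c s B)) = n - 1 := by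
  rw [edgeColors_starRecolor_of_le c B hs, card_image_of_injective _ fun a b h => by omega,
    card_range]

lemma RecolorStep.card_edgeColors_le {p q : ℕ × Finset ℕ} (h : RecolorStep c p q) :
    #(edgeColors (starRecolor c q.1 q.2)) ≤ #(edgeColors (starRecolor c p.1 p.2)) + 1 ∧
      #(edgeColors (starRecolor c p.1 p.2)) ≤ #(edgeColors (starRecolor c q.1 q.2)) + 1 := by
  cases h with
  | @absorb s B b hb =>
    constructor
    · refine card_edgeColors_le_succ (b := 2 * s) fun e _ => ?_
      unfold starRecolor
      split_ifs <;> grind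
    · refine card_edgeColors_le_succ (b := 2 * b + 1) fun e _ => ?_
      unfold starRecolor
      split_ifs <;> grind
  | advance s =>
    refine ⟨card_edgeColors_le_succ (b := 2 * s) fun e _ => ?_, le_add_right (card_le_card ?_)⟩
    · unfold starRecolor
      split_ifs <;> grind
    intro x hx
    obtain ⟨e, hd, rfl⟩ := mem_edgeColors.mp hx
    rw [mem_edgeColors]
    by_cases he : minVertex e = s ∧ c e ∉ privateColors c s
    · obtain ⟨e', hd', hlt, hce⟩ : ∃ e', ¬ e'.IsDiag ∧ s < minVertex e' ∧ c e' = c e := by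
        simpa [privateColors, mem_edgeColors.mpr ⟨e, hd, rfl⟩] using he.2
      refine ⟨e', hd', ?_⟩
      unfold starRecolor
      split_ifs <;> grind
    · exact ⟨e, hd, by unfold starRecolor; split_ifs <;> grind⟩

lemma reflTransGen_recolorStep_absorb (s : ℕ) {D : Finset ℕ} (hD : D ⊆ privateColors c s) :
    Relation.ReflTransGen (RecolorStep c) (s, ∅) (s, D) := by
  induction D using Finset.induction_on with
  | empty => exact .refl
  | insert b D _ ih =>
    exact (ih ((subset_insert b D).trans hD)).tail (.absorb (hD (mem_insert_self b D)))

lemma reflTransGen_recolorStep_zero_empty (s : ℕ) :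
    Relation.ReflTransGen (RecolorStep c) (0, ∅) (s, ∅) := by
  induction s with
  | zero => exact .refl
  | succ s ih => exact (ih.trans (reflTransGen_recolorStep_absorb c s subset_rfl)).tail (.advance s)

lemma subset_privateColors_of_reflTransGen {p q : ℕ × Finset ℕ}
    (h : Relation.ReflTransGen (RecolorStep c) p q) (hp : p.2 ⊆ privateColors c p.1) :
    q.2 ⊆ privateColors c q.1 := by
  induction h with
  | refl => exact hp
  | tail _ hstep ih =>
    cases hstep with
    | absorb hb => exact insert_subset hb ih
    | advance s => exact empty_subset _

lemma starRecolor_eq_of_eq {s : ℕ} {B : Finset ℕ} (hB : B ⊆ privateColors c s)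
    {e e' : Sym2 (Fin n)} (hd : ¬ e.IsDiag) (hd' : ¬ e'.IsDiag) (hs : s ≤ minVertex e)
    (hs' : s ≤ minVertex e') (hce : c e = c e') :
    starRecolor c s B e = starRecolor c s B e' := by
  by_cases hb : c e ∈ B
  · -- a colour of `B` does not occur beyond `s`, so both edges start at `s`
    have hpriv := (mem_filter.mp (hB hb)).2
    have he : minVertex e = s := by
      by_contra h
      exact hpriv e hd (by omega) rfl
    have he' : minVertex e' = s := by
      by_contra h
      exact hpriv e' hd' (by omega) hce.symm
    simp [starRecolor, he, he', hb, ← hce]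
  · unfold starRecolor
    split_ifs <;> grind

variable {c}

lemma not_hasMonoCopy_starRecolor (G : SimpleGraph α) (hG : ¬ IsStar G) (hc : ¬ HasMonoCopy c G)
    (s : ℕ) (B : Finset ℕ) : ¬ HasMonoCopy (starRecolor c s B) G := by
  rintro ⟨f, κ, hf⟩
  rcases Nat.even_or_odd' κ with ⟨i, rfl | rfl⟩
  · have hcentre : ∀ u v, G.Adj u v → (f u).val = i ∨ (f v).val = i := by
      intro u v huv
      have := hf u v huv
      rw [starRecolor, minVertex_mk] at this
      split_ifs at this <;> omega
    by_cases hi : ∃ v, (f v).val = i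
    · obtain ⟨v, hv⟩ := hi
      have hcv : ∀ w, (f w).val = i → w = v := fun w hw => f.injective (Fin.ext (hw.trans hv.symm))
      exact hG ⟨v, fun u w huw => (hcentre u w huw).imp (hcv u) (hcv w)⟩
    · have hi := not_exists.mp hi
      exact hc ⟨f, 0, fun u v huv => ((hcentre u v huv).elim (hi u) (hi v)).elim⟩
  · refine hc ⟨f, i, fun u v huv => ?_⟩
    have := hf u v huv
    unfold starRecolor at this
    split_ifs at this <;> omega

lemma not_hasRainbowCopy_starRecolor [Fintype β] (H : SimpleGraph β) [DecidableRel H.Adj]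
    (hH : ∀ v : β, 2 ≤ H.degree v) (hc : ¬ HasRainbowCopy c H) {s : ℕ} {B : Finset ℕ}
    (hB : B ⊆ privateColors c s) : ¬ HasRainbowCopy (starRecolor c s B) H := by
  rintro ⟨f, hf⟩
  obtain ⟨u, v, u', v', huv, huv', hce, hne⟩ : ∃ u v u' v', H.Adj u v ∧ H.Adj u' v' ∧
      c s(f u, f v) = c s(f u', f v') ∧ s(u, v) ≠ s(u', v') := by
    by_contra! h
    exact hc ⟨f, h⟩
  have : Nonempty β := ⟨u⟩
  obtain ⟨u₀, hu₀⟩ := Finite.exists_min fun b => (f b).val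
  by_cases hs : (f u₀).val < s
  · -- two edges at the lowest vertex of the copy both get the star colour of that vertex
    obtain ⟨w₁, hw₁, w₂, hw₂, hw⟩ := one_lt_card.mp (hH u₀)
    rw [mem_neighborFinset] at hw₁ hw₂
    have hstar : ∀ w, starRecolor c s B s(f u₀, f w) = 2 * (f u₀).val := fun w => by
      rw [starRecolor_of_lt c (by simpa [hu₀ w] using hs), minVertex_mk, min_eq_left (hu₀ w)]
    have := hf u₀ w₁ u₀ w₂ hw₁ hw₂ ((hstar w₁).trans (hstar w₂).symm)
    rcases Sym2.eq_iff.mp this with ⟨-, h⟩ | ⟨h, -⟩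
    · exact hw h
    · exact H.ne_of_adj hw₂ h
  · have hnd : ∀ a b, H.Adj a b → ¬ (s(f a, f b) : Sym2 (Fin n)).IsDiag := fun a b hab h =>
      H.ne_of_adj hab (f.injective (Sym2.mk_isDiag_iff.mp h))
    have hge : ∀ a b, s ≤ minVertex s(f a, f b) := fun a b => by
      have := hu₀ a
      have := hu₀ b
      simp only [minVertex_mk]
      omega
    exact hne (hf u v u' v' huv huv'
      (starRecolor_eq_of_eq c hB (hnd u v huv) (hnd u' v' huv') (hge u v) (hge u' v') hce))

lemma mem_mixedSpectrum_of_mem_uIcc [Fintype β] (G : SimpleGraph α) (H : SimpleGraph β)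
    [DecidableRel H.Adj] (hG : ¬ IsStar G) (hH : ∀ v : β, 2 ≤ H.degree v)
    (hc : GoodColoring c G H) {k : ℕ} (hk : k ∈ Set.uIcc #(edgeColors c) (n - 1)) :
    k ∈ mixedSpectrum n G H := by
  obtain ⟨⟨s, B⟩, hreach, hcard⟩ := (reflTransGen_recolorStep_zero_empty c n).exists_eq_of_mem_uIcc
    (g := fun p => #(edgeColors (starRecolor c p.1 p.2))) (fun _ _ h => h.card_edgeColors_le c)
    (by rwa [card_edgeColors_starRecolor_zero_empty, card_edgeColors_starRecolor_of_le c ∅ le_rfl])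
  have hB : B ⊆ privateColors c s := subset_privateColors_of_reflTransGen c hreach (empty_subset _)
  exact ⟨starRecolor c s B,
    ⟨not_hasMonoCopy_starRecolor G hG hc.1 s B, not_hasRainbowCopy_starRecolor H hH hc.2 hB⟩, hcard⟩

end Recoloring

/-- If `G` is not a star and `H` has minimum degree at least 2, then
`S(n;G,H)` is an interval of integers. -/
theorem stmt_4 [Fintype β] (G : SimpleGraph α) (H : SimpleGraph β) [DecidableRel H.Adj]
    (hG : ¬ IsStar G) (hH : ∀ v : β, 2 ≤ H.degree v) (n k k1 k2 : ℕ)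
    (h1 : k1 ∈ mixedSpectrum n G H) (h2 : k2 ∈ mixedSpectrum n G H)
    (hk1 : k1 ≤ k) (hk2 : k ≤ k2) :
    k ∈ mixedSpectrum n G H := by
  obtain ⟨c₁, hc₁, rfl⟩ := h1
  obtain ⟨c₂, hc₂, rfl⟩ := h2
  rcases le_total k (n - 1) with hk | hk
  · exact mem_mixedSpectrum_of_mem_uIcc G H hG hH hc₁ (Set.mem_uIcc_of_le hk1 hk)
  · exact mem_mixedSpectrum_of_mem_uIcc G H hG hH hc₂ (Set.mem_uIcc_of_ge hk hk2)
end

section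
/- In any (G,H)-good edge-coloring c of K_n using the minimum possible number of colors min S(n;G,H), where G is not a star, every vertex x is incident to at most one color that appears only on edges incident to x (i.e., |N_c(x)| ≤ 1 for all x). -/
open SimpleGraph Finset

universe u v

variable {α : Type u} {β : Type v}

open scoped Classical in
/-- `N_c(x)`: the colors appearing only on edges incident to `x`. -/
noncomputable def Ncolors {n : ℕ} (c : Sym2 (Fin n) → ℕ) (x : Fin n) : Finset ℕ :=
  (edgeColors c).filter fun col => ∀ e : Sym2 (Fin n), ¬ e.IsDiag → c e = col → x ∈ e

/-- In a minimum-color `(G,H)`-good coloring with `G` not a star, `|N_c(x)| ≤ 1`. -/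
theorem stmt_5 (n : ℕ) (G : SimpleGraph α) (H : SimpleGraph β) (hG : ¬ IsStar G)
    (c : Sym2 (Fin n) → ℕ) (hc : GoodColoring c G H)
    (hmin : (edgeColors c).card = sInf (mixedSpectrum n G H)) (x : Fin n) :
    (Ncolors c x).card ≤ 1 := by
  classical
  by_contra h
  push_neg at h
  obtain ⟨a, ha, b, hb, hab⟩ := Finset.one_lt_card.mp h
  simp only [Ncolors, Finset.mem_filter] at ha hb
  obtain ⟨haE, hax⟩ := ha
  obtain ⟨hbE, hbx⟩ := hb
  set g : ℕ → ℕ := fun y => if y = b then a else y with hg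
  set c' : Sym2 (Fin n) → ℕ := fun e => g (c e) with hc'
  -- c' is a good coloring
  have hgood : GoodColoring c' G H := by
    constructor
    · rintro ⟨f, k, hk⟩
      by_cases hE : ∃ u v : α, G.Adj u v
      · obtain ⟨u₀, v₀, h₀⟩ := hE
        by_cases hka : k = a
        · -- every G-edge maps to an edge incident to x
          have hx : ∀ u v : α, G.Adj u v → f u = x ∨ f v = x := by
            intro u v huv
            have hne : f u ≠ f v := f.injective.ne (G.ne_of_adj huv)
            have hd : ¬ (s(f u, f v)).IsDiag := by
              simpa [Sym2.isDiag_iff_proj_eq] using hne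
            have hcuv := hk u v huv
            have hmem : x ∈ s(f u, f v) := by
              by_cases hcb : c s(f u, f v) = b
              · exact hbx _ hd hcb
              · apply hax _ hd
                have : c' s(f u, f v) = c s(f u, f v) := by
                  simp [hc', hg, hcb]
                rw [← this, hcuv, hka]
            rcases Sym2.mem_iff.mp hmem with h1 | h1
            · exact Or.inl h1.symm
            · exact Or.inr h1.symm
          have hx0 : ∃ w : α, f w = x := by
            rcases hx u₀ v₀ h₀ with h1 | h1
            · exact ⟨u₀, h1⟩
            · exact ⟨v₀, h1⟩
          obtain ⟨w, hw⟩ := hx0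
          refine hG ⟨w, fun u v huv => ?_⟩
          rcases hx u v huv with h1 | h1
          · exact Or.inl (f.injective (h1.trans hw.symm))
          · exact Or.inr (f.injective (h1.trans hw.symm))
        · -- the mono copy exists in c as well
          refine hc.1 ⟨f, k, fun u v huv => ?_⟩
          have hcuv := hk u v huv
          by_cases hcb : c s(f u, f v) = b
          · exfalso; apply hka
            rw [← hcuv]; simp [hc', hg, hcb]
          · rw [← hcuv]; simp [hc', hg, hcb]
      · push_neg at hE
        exact hc.1 ⟨f, 0, fun u v huv => absurd huv (hE u v)⟩
    · rintro ⟨f, hf⟩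
      exact hc.2 ⟨f, fun u v u' v' h1 h2 hceq =>
        hf u v u' v' h1 h2 (congrArg g hceq)⟩
  -- c' uses fewer colors
  have himg : edgeColors c' = (edgeColors c).image g := by
    simp only [edgeColors, Finset.image_image]
    rfl
  have hsub : edgeColors c' ⊆ (edgeColors c).erase b := by
    intro y hy
    rw [himg, Finset.mem_image] at hy
    obtain ⟨z, hz, rfl⟩ := hy
    rw [Finset.mem_erase]
    by_cases hzb : z = b
    · constructor
      · simp only [hg, hzb, if_pos rfl]; exact hab
      · simp only [hg, hzb, if_pos rfl]; exact haE
    · constructor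
      · simp [hg, hzb]
      · simpa [hg, hzb] using hz
  have hlt : (edgeColors c').card < (edgeColors c).card := by
    calc (edgeColors c').card ≤ ((edgeColors c).erase b).card := Finset.card_le_card hsub
    _ < (edgeColors c).card := Finset.card_erase_lt_of_mem hbE
  have hmem : (edgeColors c').card ∈ mixedSpectrum n G H := ⟨c', hgood, rfl⟩
  have := Nat.sInf_le hmem
  omega
end

section
/- For ℓ ≥ 2 and k ≥ 1, there exists an edge-coloring of the complete graph on (2ℓ−1) + (k−1)(ℓ−1) vertices with exactly k colors that contains no monochromatic matching of size ℓ and no rainbow cycle (in particular, no rainbow triangle and no rainbow K_3+e). -/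
/-!
Number the vertices `0, 1, …, n-1`, give vertex `v` the level `⌊(v - ℓ)/(ℓ - 1)⌋ + 1`
(so the first `2ℓ - 1` vertices form level `1` and each later level is a batch of `ℓ - 1`
vertices), and color every edge by the level of its larger endpoint.

In any subgraph of minimum degree at least two, in particular in any cycle, the largest vertex
sees two edges of the same color, so nothing of this kind is rainbow. The levels are monotone,
so the `2ℓ` vertices of a matching of color `j` all lie at levels `≤ j`, and its `ℓ` larger
endpoints are distinct vertices of level `j`. For `j = 1` the first count exceeds `2ℓ - 1`; for
`j ≥ 2` the second exceeds `ℓ - 1`.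
-/

open SimpleGraph Finset

universe u v

variable {α : Type u} {β : Type v}

section MaxColoring

variable {n : ℕ}

def maxColoring (φ : Fin n → ℕ) : Sym2 (Fin n) → ℕ :=
  Sym2.lift ⟨fun a b => φ (max a b), fun a b => congrArg φ (max_comm a b)⟩

@[simp]
lemma maxColoring_mk (φ : Fin n → ℕ) (a b : Fin n) : maxColoring φ s(a, b) = φ (max a b) :=
  rfl

lemma edgeColors_maxColoring (φ : Fin n → ℕ) :
    edgeColors (maxColoring φ) = (univ.filter fun v : Fin n => (v : ℕ) ≠ 0).image φ := by
  ext j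
  simp only [edgeColors, mem_image, mem_filter, mem_univ, true_and]
  constructor
  · rintro ⟨e, he, rfl⟩
    induction e using Sym2.ind with
    | _ a b =>
      refine ⟨max a b, fun h0 => he (Sym2.mk_isDiag_iff.mpr (Fin.ext ?_)), rfl⟩
      rw [Fin.coe_max] at h0
      omega
  · rintro ⟨v, hv, rfl⟩
    refine ⟨s(⟨0, by omega⟩, v), fun h => hv (congrArg Fin.val (Sym2.mk_isDiag_iff.mp h)).symm, ?_⟩
    rw [maxColoring_mk, max_eq_right (Fin.le_def.mpr (Nat.zero_le _))]

lemma not_hasRainbowCopy_maxColoring {H : SimpleGraph β} (φ : Fin n → ℕ) (S : Finset β)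
    (hS : S.Nonempty) (hdeg : ∀ v ∈ S, ∃ u ∈ S, ∃ w ∈ S, u ≠ w ∧ H.Adj v u ∧ H.Adj v w) :
    ¬ HasRainbowCopy (maxColoring φ) H := by
  rintro ⟨f, hf⟩
  obtain ⟨v, hvS, hv⟩ := S.exists_max_image f hS
  obtain ⟨u, huS, w, hwS, huw, hvu, hvw⟩ := hdeg v hvS
  have hcol : maxColoring φ s(f v, f u) = maxColoring φ s(f v, f w) := by
    rw [maxColoring_mk, maxColoring_mk, max_eq_left (hv u huS), max_eq_left (hv w hwS)]
  rcases Sym2.eq_iff.mp (hf v u v w hvu hvw hcol) with ⟨-, h⟩ | ⟨h, -⟩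
  · exact huw h
  · exact hvw.ne h

lemma not_hasRainbowCopy_maxColoring_of_triangle {H : SimpleGraph β} (φ : Fin n → ℕ)
    {a b d : β} (hab : H.Adj a b) (had : H.Adj a d) (hbd : H.Adj b d) :
    ¬ HasRainbowCopy (maxColoring φ) H := by
  classical
  refine not_hasRainbowCopy_maxColoring φ {a, b, d} (insert_nonempty _ _) fun v hv => ?_
  simp only [mem_insert, mem_singleton] at hv
  rcases hv with rfl | rfl | rfl
  · exact ⟨b, by simp, d, by simp, hbd.ne, hab, had⟩
  · exact ⟨a, by simp, d, by simp, had.ne, hab.symm, hbd⟩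
  · exact ⟨a, by simp, b, by simp, hab.ne, had.symm, hbd.symm⟩

lemma not_hasRainbowCopy_maxColoring_cycGraph (φ : Fin n → ℕ) {m : ℕ} (hm : 3 ≤ m) :
    ¬ HasRainbowCopy (maxColoring φ) (cycGraph m) := by
  have : Fact (1 < m) := ⟨by omega⟩
  have h2 : (2 : ZMod m) ≠ 0 := fun h => by
    have := congrArg ZMod.val h
    rw [ZMod.val_two_eq_two_mod, ZMod.val_zero, Nat.mod_eq_of_lt (by omega)] at this
    omega
  refine not_hasRainbowCopy_maxColoring φ univ univ_nonempty fun v _ =>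
    ⟨v + 1, mem_univ _, v - 1, mem_univ _, fun h => h2 ?_, ?_, ?_⟩
  · linear_combination h
  · exact (fromRel_adj _ _ _).mpr ⟨by simp, Or.inr rfl⟩
  · exact (fromRel_adj _ _ _).mpr ⟨fun h => one_ne_zero (sub_eq_self.mp h.symm), Or.inl (by ring)⟩

lemma exists_card_le_of_hasMonoCopy_matchingGraph {φ : Fin n → ℕ} (hφ : Monotone φ) {ℓ : ℕ}
    (h : HasMonoCopy (maxColoring φ) (matchingGraph ℓ)) :
    ∃ j, 2 * ℓ ≤ #{v | φ v ≤ j} ∧ ℓ ≤ #{v | φ v = j} := by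
  obtain ⟨f, j, hf⟩ := h
  set top : Fin ℓ → Fin n := fun i => max (f (i, 0)) (f (i, 1))
  have htop : ∀ i, φ (top i) = j := fun i => hf (i, 0) (i, 1) (by simp [matchingGraph])
  have hle_top : ∀ x : Fin ℓ × Fin 2, f x ≤ top x.1 := by
    rintro ⟨i, b⟩
    fin_cases b
    exacts [le_max_left _ _, le_max_right _ _]
  have htop_inj : Function.Injective top := by
    intro i i' h
    rcases max_choice (f (i, 0)) (f (i, 1)) with h1 | h1 <;>
      rcases max_choice (f (i', 0)) (f (i', 1)) with h2 | h2 <;>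
      exact congrArg Prod.fst (f.injective (h1.symm.trans (h.trans h2)))
  refine ⟨j, ?_, ?_⟩
  · calc 2 * ℓ = #(univ : Finset (Fin ℓ × Fin 2)) := by simp [mul_comm]
      _ ≤ #{v | φ v ≤ j} := card_le_card_of_injOn f
        (fun x _ => mem_filter.mpr ⟨mem_univ _, (hφ (hle_top x)).trans_eq (htop x.1)⟩)
        f.injective.injOn
  · calc ℓ = #(univ : Finset (Fin ℓ)) := by simp
      _ ≤ #{v | φ v = j} := card_le_card_of_injOn top
        (fun i _ => mem_filter.mpr ⟨mem_univ _, htop i⟩) htop_inj.injOn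

end MaxColoring

lemma card_filter_fin_le {n : ℕ} {P : ℕ → Prop} [DecidablePred P] {t : Finset ℕ}
    (h : ∀ v < n, P v → v ∈ t) : #{v : Fin n | P v} ≤ #t :=
  card_le_card_of_injOn Fin.val (fun v hv => h v v.isLt (by simpa using hv))
    Fin.val_injective.injOn

section Level

variable {ℓ : ℕ}

/-- Truncated subtraction puts all of `0, …, 2ℓ - 2` at level `1`. -/
def level (ℓ v : ℕ) : ℕ := (v - ℓ) / (ℓ - 1) + 1

lemma level_monotone (ℓ : ℕ) : Monotone (level ℓ) := fun _ _ h =>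
  Nat.add_le_add_right (Nat.div_le_div_right (Nat.sub_le_sub_right h ℓ)) 1

lemma level_le_one_iff (hℓ : 2 ≤ ℓ) {v : ℕ} : level ℓ v ≤ 1 ↔ v < 2 * ℓ - 1 := by
  rw [level, add_le_iff_nonpos_left, Nat.le_zero, Nat.div_eq_zero_iff]
  omega

lemma mem_Ico_of_level_eq (hℓ : 2 ≤ ℓ) {v j : ℕ} (hj : 2 ≤ j) (h : level ℓ v = j) :
    v ∈ Ico (ℓ + (j - 1) * (ℓ - 1)) (ℓ + (j - 1) * (ℓ - 1) + (ℓ - 1)) := by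
  have hdiv : (v - ℓ) / (ℓ - 1) = j - 1 := Nat.eq_sub_of_add_eq h
  rw [Nat.div_eq_iff (by omega)] at hdiv
  have ht : 0 < (j - 1) * (ℓ - 1) := Nat.mul_pos (by omega) (by omega)
  rw [mem_Ico]
  generalize (j - 1) * (ℓ - 1) = t at hdiv ht ⊢
  omega

lemma level_add_mul (hℓ : 2 ≤ ℓ) (i : ℕ) : level ℓ (ℓ + i * (ℓ - 1)) = i + 1 := by
  rw [level, Nat.add_sub_cancel_left, Nat.mul_div_cancel _ (by omega)]

end Level

section CockayneLorimer

variable {ℓ k : ℕ}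

lemma edgeColors_maxColoring_level (hℓ : 2 ≤ ℓ) (hk : 1 ≤ k) :
    edgeColors (maxColoring fun v : Fin (2 * ℓ - 1 + (k - 1) * (ℓ - 1)) => level ℓ v) =
      Icc 1 k := by
  have hn : 2 * ℓ - 1 + (k - 1) * (ℓ - 1) = ℓ + k * (ℓ - 1) := by
    have := Nat.le_mul_of_pos_left (ℓ - 1) hk
    rw [Nat.sub_one_mul]
    omega
  rw [edgeColors_maxColoring]
  ext j
  simp only [mem_image, mem_filter, mem_univ, true_and, mem_Icc]
  constructor
  · rintro ⟨v, -, rfl⟩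
    have hv : (v - ℓ) / (ℓ - 1) < k := (Nat.div_lt_iff_lt_mul (by omega)).mpr (by omega)
    exact ⟨Nat.le_add_left _ _, by rw [level]; omega⟩
  · rintro ⟨hj1, hjk⟩
    have hw : (j - 1) * (ℓ - 1) < k * (ℓ - 1) := Nat.mul_lt_mul_of_pos_right (by omega) (by omega)
    exact ⟨⟨ℓ + (j - 1) * (ℓ - 1), by omega⟩, (by omega : 0 < ℓ + (j - 1) * (ℓ - 1)).ne',
      by rw [level_add_mul hℓ]; omega⟩

lemma not_hasMonoCopy_maxColoring_level (hℓ : 2 ≤ ℓ) (k : ℕ) :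
    ¬ HasMonoCopy (maxColoring fun v : Fin (2 * ℓ - 1 + (k - 1) * (ℓ - 1)) => level ℓ v)
      (matchingGraph ℓ) := by
  intro h
  obtain ⟨j, hall, htop⟩ := exists_card_le_of_hasMonoCopy_matchingGraph
    ((level_monotone ℓ).comp Fin.val_strictMono.monotone) h
  rcases Nat.lt_or_ge j 2 with hj | hj
  · have := hall.trans (card_filter_fin_le (P := fun v => level ℓ v ≤ j)
      (t := range (2 * ℓ - 1)) fun v _ hv =>
        mem_range.mpr ((level_le_one_iff hℓ).mp (hv.trans (by omega))))
    rw [card_range] at this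
    omega
  · have := htop.trans (card_filter_fin_le (P := fun v => level ℓ v = j)
      fun v _ hv => mem_Ico_of_level_eq hℓ hj hv)
    rw [Nat.card_Ico] at this
    omega

end CockayneLorimer

/-- The Cockayne–Lorimer extremal coloring: a `k`-coloring of the complete graph on
`(2ℓ-1)+(k-1)(ℓ-1)` vertices with no monochromatic `ℓK_2` and no rainbow cycle
(in particular no rainbow `K_3` and no rainbow `K_3+e`). -/
theorem stmt_7 (ℓ k : ℕ) (hℓ : 2 ≤ ℓ) (hk : 1 ≤ k) :
    ∃ c : Sym2 (Fin (2*ℓ - 1 + (k-1)*(ℓ-1))) → ℕ,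
      (edgeColors c).card = k ∧ ¬ HasMonoCopy c (matchingGraph ℓ) ∧
      (∀ m : ℕ, 3 ≤ m → ¬ HasRainbowCopy c (cycGraph m)) ∧
      ¬ HasRainbowCopy c (completeGraph (Fin 3)) ∧ ¬ HasRainbowCopy c K3e := by
  refine ⟨maxColoring fun v => level ℓ v, ?_, not_hasMonoCopy_maxColoring_level hℓ k,
    fun m hm => not_hasRainbowCopy_maxColoring_cycGraph _ hm, ?_, ?_⟩
  · rw [edgeColors_maxColoring_level hℓ hk, Nat.card_Icc, Nat.add_sub_cancel]
  · exact not_hasRainbowCopy_maxColoring_of_triangle _ (a := 0) (b := 1) (d := 2)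
      (by simp) (by simp) (by simp)
  · exact not_hasRainbowCopy_maxColoring_of_triangle _ (a := 0) (b := 1) (d := 2)
      (by simp [K3e]) (by simp [K3e]) (by simp [K3e])
end

section
/- For n ≥ 4, S(n; P_4, K_3) = S(n; P_4, K_3+e) = {n−2, n−1}: an edge-coloring of K_n with no monochromatic path on 4 vertices and no rainbow triangle (equivalently, no rainbow K_3+e) exists with exactly k colors if and only if k = n−2 or k = n−1. -/
open SimpleGraph Finset

universe u v

variable {α : Type u} {β : Type v}

/-!
A set of vertices is Gallai if it spans no rainbow triangle; "no rainbow `K₃ + e`" says that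
every edge at a vertex of a rainbow triangle has one of the triangle's three colors.

Upper bound. Once there are five vertices, deleting a vertex `v` loses at most one color: two
colors seen only at `v`, on `va` and `vb`, make `vab` rainbow, so for two further vertices `w, w'`
the edges `aw` and `bw'` take the color of `ab`, and `w a b w'` is a monochromatic `P₄`. Four
vertices carry at most three colors, and a Gallai set of `k` vertices at most `k - 1`.

Lower bound, Gallai case. Two disjoint edges of one color force a monochromatic `P₄`, so every
color class is a star or a triangle; on four or more vertices some class is a star, and deleting
its center loses a color.

Lower bound, rainbow triangle `xyz`. Every other vertex sees `x, y, z` in triangle colors only. If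
an edge `ww'` off the triangle had a triangle color, then `w`, `w'` and any third vertex would see
only triangle colors, and six vertices in three colors contain a monochromatic `P₄`. Hence the
remaining `n - 3` vertices form a Gallai set in new colors: at least `3 + (n - 5)` colors.

Both values are attained by coloring `ab` with `min a b` capped at `m ∈ {n - 3, n - 2}`: no
triangle is rainbow, and the color classes are stars and at most one triangle.
-/

namespace EdgeColoring

variable {V κ : Type*}

section Predicates

variable (c : Sym2 V → κ)

def IsRainbowTriangle (a b d : V) : Prop :=
  c s(a, b) ≠ c s(a, d) ∧ c s(a, b) ≠ c s(b, d) ∧ c s(a, d) ≠ c s(b, d)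

def NoMonoP4 : Prop :=
  ∀ ⦃a b d e : V⦄, [a, b, d, e].Nodup → c s(a, b) = c s(b, d) → c s(b, d) ≠ c s(d, e)

def GallaiOn (U : Finset V) : Prop :=
  ∀ a ∈ U, ∀ b ∈ U, ∀ d ∈ U, ¬ IsRainbowTriangle c a b d

def IncidentColorsIn (T : Finset κ) (u : V) : Prop :=
  ∀ e, e ≠ u → c s(u, e) ∈ T

def triangleColors [DecidableEq κ] (a b d : V) : Finset κ :=
  {c s(a, b), c s(a, d), c s(b, d)}

/-- A rainbow `K₃ + e` is a rainbow triangle `abd` with a pendant edge `ae` of a fourth color. -/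
def NoRainbowK3e [DecidableEq κ] : Prop :=
  ∀ ⦃a b d e : V⦄, IsRainbowTriangle c a b d → e ≠ a → c s(a, e) ∈ triangleColors c a b d

def colorsOn [DecidableEq κ] (U : Finset V) : Finset κ :=
  U.offDiag.image fun p => c s(p.1, p.2)

end Predicates

variable {c : Sym2 V → κ} {a b d e u v w : V}

lemma color_swap (c : Sym2 V → κ) (a b : V) : c s(a, b) = c s(b, a) :=
  congrArg c Sym2.eq_swap

namespace IsRainbowTriangle

lemma ne₁₂ (h : IsRainbowTriangle c a b d) : a ≠ b := by
  rintro rfl; exact h.2.2 rfl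

lemma ne₁₃ (h : IsRainbowTriangle c a b d) : a ≠ d := by
  rintro rfl; exact h.2.1 (color_swap c a b)

lemma ne₂₃ (h : IsRainbowTriangle c a b d) : b ≠ d := by
  rintro rfl; exact h.1 rfl

lemma swap₂₃ (h : IsRainbowTriangle c a b d) : IsRainbowTriangle c a d b := by
  obtain ⟨h₁, h₂, h₃⟩ := h
  rw [IsRainbowTriangle, Sym2.eq_swap (a := d) (b := b)]
  exact ⟨h₁.symm, h₃, h₂⟩

lemma rotate (h : IsRainbowTriangle c a b d) : IsRainbowTriangle c b d a := by
  obtain ⟨h₁, h₂, h₃⟩ := h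
  refine ⟨?_, ?_, ?_⟩ <;> simp only [Sym2.eq_swap (a := b) (b := a), Sym2.eq_swap (a := d) (b := a)]
  exacts [h₂.symm, h₃.symm, h₁]

end IsRainbowTriangle

lemma nodup_four (hab : a ≠ b) (had : a ≠ d) (hae : a ≠ e) (hbd : b ≠ d) (hbe : b ≠ e)
    (hde : d ≠ e) : [a, b, d, e].Nodup := by
  simp [*]

lemma NoMonoP4.false (hP : NoMonoP4 c) (hd : [a, b, d, e].Nodup) {k : κ}
    (h₁ : c s(a, b) = k) (h₂ : c s(b, d) = k) (h₃ : c s(d, e) = k) : False :=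
  hP hd (h₁.trans h₂.symm) (h₂.trans h₃.symm)

lemma NoMonoP4.comp_map (hP : NoMonoP4 c) {W : Type*} {f : W → V} (hf : f.Injective) :
    NoMonoP4 (c ∘ Sym2.map f) := fun _ _ _ _ hd =>
  hP (hd.map hf)

lemma GallaiOn.mono {U U' : Finset V} (hG : GallaiOn c U) (h : U' ⊆ U) : GallaiOn c U' :=
  fun a ha b hb d hd => hG a (h ha) b (h hb) d (h hd)

section triangleColors

variable [DecidableEq κ]

lemma mem_triangleColors {k : κ} :
    k ∈ triangleColors c a b d ↔ k = c s(a, b) ∨ k = c s(a, d) ∨ k = c s(b, d) := by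
  simp [triangleColors]

lemma triangleColors_swap₂₃ : triangleColors c a d b = triangleColors c a b d := by
  ext k; simp only [mem_triangleColors, Sym2.eq_swap (a := d) (b := b)]; tauto

lemma triangleColors_rotate : triangleColors c b d a = triangleColors c a b d := by
  ext k; simp only [mem_triangleColors, Sym2.eq_swap (a := b) (b := a),
    Sym2.eq_swap (a := d) (b := a)]; tauto

lemma IsRainbowTriangle.card_triangleColors (h : IsRainbowTriangle c a b d) :
    #(triangleColors c a b d) = 3 :=
  card_eq_three.2 ⟨_, _, _, h.1, h.2.1, h.2.2, rfl⟩

namespace NoRainbowK3e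

variable (hK : NoRainbowK3e c) (h : IsRainbowTriangle c a b d)
include hK h

lemma incidentColorsIn₁ : IncidentColorsIn c (triangleColors c a b d) a :=
  fun _ he => hK h he

lemma incidentColorsIn₂ : IncidentColorsIn c (triangleColors c a b d) b :=
  triangleColors_rotate (c := c) ▸ hK.incidentColorsIn₁ h.rotate

lemma incidentColorsIn₃ : IncidentColorsIn c (triangleColors c a b d) d :=
  triangleColors_rotate (c := c) ▸ hK.incidentColorsIn₂ h.rotate

lemma mem_triangleColors_of_mem (hu : u = a ∨ u = b ∨ u = d) (he : e ≠ u) :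
    c s(u, e) ∈ triangleColors c a b d := by
  rcases hu with rfl | rfl | rfl
  exacts [hK.incidentColorsIn₁ h e he, hK.incidentColorsIn₂ h e he, hK.incidentColorsIn₃ h e he]

end NoRainbowK3e

end triangleColors

section colorsOn

variable [DecidableEq κ] {U U' : Finset V}

lemma mem_colorsOn {k : κ} : k ∈ colorsOn c U ↔ ∃ a ∈ U, ∃ b ∈ U, a ≠ b ∧ c s(a, b) = k := by
  simp [colorsOn, and_assoc]

lemma colorsOn_mono (h : U ⊆ U') : colorsOn c U ⊆ colorsOn c U' :=
  image_subset_image (offDiag_mono h)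

lemma mem_colorsOn_of_mem (ha : a ∈ U) (hb : b ∈ U) (hab : a ≠ b) : c s(a, b) ∈ colorsOn c U :=
  mem_colorsOn.2 ⟨a, ha, b, hb, hab, rfl⟩

lemma colorsOn_eq_empty (hU : #U ≤ 1) : colorsOn c U = ∅ := by
  refine eq_empty_of_forall_notMem fun k hk => ?_
  obtain ⟨a, ha, b, hb, hab, -⟩ := mem_colorsOn.1 hk
  exact hab (card_le_one.1 hU a ha b hb)

lemma colorsOn_nonempty (hU : 2 ≤ #U) : (colorsOn c U).Nonempty := by
  obtain ⟨a, ha, b, hb, hab⟩ := one_lt_card.1 hU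
  exact ⟨_, mem_colorsOn_of_mem ha hb hab⟩

lemma IsRainbowTriangle.triangleColors_subset (h : IsRainbowTriangle c a b d) (ha : a ∈ U)
    (hb : b ∈ U) (hd : d ∈ U) : triangleColors c a b d ⊆ colorsOn c U := by
  intro k hk
  rcases mem_triangleColors.1 hk with rfl | rfl | rfl
  exacts [mem_colorsOn_of_mem ha hb h.ne₁₂, mem_colorsOn_of_mem ha hd h.ne₁₃,
    mem_colorsOn_of_mem hb hd h.ne₂₃]

variable [DecidableEq V]

lemma exists_eq_of_mem_sdiff_erase {k : κ} (hk : k ∈ colorsOn c U \ colorsOn c (U.erase v)) :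
    ∃ a ∈ U.erase v, c s(v, a) = k := by
  obtain ⟨hk, hkv⟩ := mem_sdiff.1 hk
  obtain ⟨a, ha, b, hb, hab, rfl⟩ := mem_colorsOn.1 hk
  by_cases hav : a = v
  · subst hav; exact ⟨b, mem_erase.2 ⟨Ne.symm hab, hb⟩, rfl⟩
  by_cases hbv : b = v
  · subst hbv; exact ⟨a, mem_erase.2 ⟨hav, ha⟩, Sym2.eq_swap ▸ rfl⟩
  exact absurd (mem_colorsOn_of_mem (mem_erase.2 ⟨hav, ha⟩) (mem_erase.2 ⟨hbv, hb⟩) hab) hkv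

lemma card_colorsOn_le_erase_add_one
    (h : ∀ p ∈ colorsOn c U \ colorsOn c (U.erase v), ∀ q ∈ colorsOn c U \ colorsOn c (U.erase v),
      p = q) :
    #(colorsOn c U) ≤ #(colorsOn c (U.erase v)) + 1 :=
  (card_le_card_sdiff_add_card (t := colorsOn c (U.erase v))).trans
    (by have := card_le_one.2 h; omega)

lemma exists_rainbow_of_mem_sdiff_erase {p q : κ} (hp : p ∈ colorsOn c U \ colorsOn c (U.erase v))
    (hq : q ∈ colorsOn c U \ colorsOn c (U.erase v)) (hpq : p ≠ q) :
    ∃ a ∈ U.erase v, ∃ b ∈ U.erase v,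
      c s(v, a) = p ∧ c s(v, b) = q ∧ IsRainbowTriangle c v a b := by
  obtain ⟨a, ha, rfl⟩ := exists_eq_of_mem_sdiff_erase hp
  obtain ⟨b, hb, rfl⟩ := exists_eq_of_mem_sdiff_erase hq
  have hab : a ≠ b := by rintro rfl; exact hpq rfl
  have hold := mem_colorsOn_of_mem (c := c) ha hb hab
  exact ⟨a, ha, b, hb, rfl, rfl, hpq, fun h => (mem_sdiff.1 hp).2 (h ▸ hold),
    fun h => (mem_sdiff.1 hq).2 (h ▸ hold)⟩

end colorsOn

section Gallai

variable {U : Finset V}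

lemma GallaiOn.eq_of_ne (hG : GallaiOn c U) (ha : a ∈ U) (hb : b ∈ U) (hd : d ∈ U)
    (h₁ : c s(a, b) ≠ c s(a, d)) (h₂ : c s(a, b) ≠ c s(b, d)) : c s(a, d) = c s(b, d) := by
  by_contra h₃
  exact hG a ha b hb d hd ⟨h₁, h₂, h₃⟩

lemma GallaiOn.ne_of_nodup (hP : NoMonoP4 c) (hG : GallaiOn c U) (ha : a ∈ U) (hb : b ∈ U)
    (hu : u ∈ U) (hv : v ∈ U) (hd : [a, b, u, v].Nodup) : c s(a, b) ≠ c s(u, v) := by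
  intro hk
  have hau : c s(a, u) ≠ c s(a, b) := fun h =>
    hP.false (a := b) (b := a) (d := u) (e := v) (by grind) (color_swap c b a) h hk.symm
  have hbu : c s(b, u) ≠ c s(a, b) := fun h =>
    hP.false (a := a) (b := b) (d := u) (e := v) hd rfl h hk.symm
  have hbv : c s(b, v) ≠ c s(a, b) := fun h =>
    hP.false (a := a) (b := b) (d := v) (e := u) (by grind) rfl h
      ((color_swap c v u).trans hk.symm)
  have hu_eq : c s(a, u) = c s(b, u) := hG.eq_of_ne ha hb hu hau.symm hbu.symm
  have hv_eq : c s(u, b) = c s(v, b) := hG.eq_of_ne hu hv hb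
    (fun h => hbu ((color_swap c b u).trans (h.symm.trans hk.symm)))
    (fun h => hbv ((color_swap c b v).trans (h.symm.trans hk.symm)))
  have hub : c s(u, b) = c s(a, u) := (color_swap c u b).trans hu_eq.symm
  exact hP.false (a := a) (b := u) (d := b) (e := v) (by grind) rfl hub
    ((color_swap c b v).trans (hv_eq.symm.trans hub))

lemma GallaiOn.meet_of_color_eq (hP : NoMonoP4 c) (hG : GallaiOn c U) {p q : V} (hp : p ∈ U)
    (hq : q ∈ U) (ha : a ∈ U) (hb : b ∈ U) (hpq : p ≠ q) (hab : a ≠ b) (h : c s(p, q) = c s(a, b)) :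
    p = a ∨ p = b ∨ q = a ∨ q = b := by
  by_contra! hne
  exact hG.ne_of_nodup hP hp hq ha hb (by grind) h

variable [DecidableEq V] [DecidableEq κ]

lemma exists_ne_ne_of_subset_colorsOn_erase (h : colorsOn c U ⊆ colorsOn c (U.erase v))
    (ha : a ∈ U) (hb : b ∈ U) (hab : a ≠ b) :
    ∃ p ∈ U, ∃ q ∈ U, p ≠ q ∧ p ≠ v ∧ q ≠ v ∧ c s(p, q) = c s(a, b) := by
  obtain ⟨p, hp, q, hq, hpq, h⟩ := mem_colorsOn.1 (h (mem_colorsOn_of_mem ha hb hab))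
  exact ⟨p, mem_of_mem_erase hp, q, mem_of_mem_erase hq, hpq, ne_of_mem_erase hp,
    ne_of_mem_erase hq, h⟩

lemma GallaiOn.exists_monochromatic_triangle (hP : NoMonoP4 c) (hG : GallaiOn c U)
    (hall : ∀ v ∈ U, colorsOn c U ⊆ colorsOn c (U.erase v)) (ha : a ∈ U) (hb : b ∈ U)
    (hab : a ≠ b) : ∃ d ∈ U, d ≠ a ∧ d ≠ b ∧ c s(a, d) = c s(a, b) ∧ c s(b, d) = c s(a, b) := by
  have turn : ∀ a ∈ U, ∀ b ∈ U, a ≠ b → ∃ d ∈ U, d ≠ a ∧ d ≠ b ∧ c s(b, d) = c s(a, b) := by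
    intro a ha b hb hab
    obtain ⟨p, hp, q, hq, hpq, hpa, hqa, h⟩ :=
      exists_ne_ne_of_subset_colorsOn_erase (hall a ha) ha hb hab
    rcases hG.meet_of_color_eq hP hp hq ha hb hpq hab h with rfl | rfl | rfl | rfl
    · exact absurd rfl hpa
    · exact ⟨q, hq, hqa, hpq.symm, h⟩
    · exact absurd rfl hqa
    · exact ⟨p, hp, hpa, hpq, (color_swap c q p).trans h⟩
  obtain ⟨d, hd, hda, hdb, hbd⟩ := turn a ha b hb hab
  obtain ⟨d', hd', hd'b, hd'a, had'⟩ := turn b hb a ha hab.symm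
  obtain rfl : d = d' := by
    have := hG.meet_of_color_eq hP ha hd' hb hd hd'a.symm hdb.symm
      ((had'.trans (color_swap c b a)).trans hbd.symm)
    grind
  exact ⟨d, hd, hda, hdb, had'.trans (color_swap c b a), hbd⟩

lemma GallaiOn.exists_mem_colorsOn_notMem_erase (hP : NoMonoP4 c) (hG : GallaiOn c U)
    (hU : 4 ≤ #U) : ∃ v ∈ U, ∃ k ∈ colorsOn c U, k ∉ colorsOn c (U.erase v) := by
  by_contra! hall
  replace hall : ∀ v ∈ U, colorsOn c U ⊆ colorsOn c (U.erase v) := fun v hv _ => hall v hv _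
  obtain ⟨a, ha, b, hb, hab⟩ := one_lt_card.1 (by omega : 1 < #U)
  obtain ⟨d, hd, hda, hdb, had, hbd⟩ := hG.exists_monochromatic_triangle hP hall ha hb hab
  obtain ⟨e, he, heabd⟩ := exists_mem_notMem_of_card_lt_card (t := U)
    ((card_le_three (a := a) (b := b) (c := d)).trans_lt (by omega))
  simp only [mem_insert, mem_singleton, not_or] at heabd
  obtain ⟨hea, heb, hed⟩ := heabd
  have hae : c s(a, e) ≠ c s(a, b) := fun h =>
    hG.ne_of_nodup hP ha he hb hd (by grind) (h.trans hbd.symm)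
  have hbe : c s(b, e) ≠ c s(a, b) := fun h =>
    hG.ne_of_nodup hP hb he ha hd (by grind) (h.trans had.symm)
  have hde : c s(d, e) ≠ c s(a, b) := fun h =>
    hG.ne_of_nodup hP hd he ha hb (by grind) h
  have hbe' : c s(a, e) = c s(b, e) := hG.eq_of_ne ha hb he hae.symm hbe.symm
  have hde' : c s(a, e) = c s(d, e) :=
    hG.eq_of_ne ha hd he (fun h => hae (h.symm.trans had)) (fun h => hde (h.symm.trans had))
  -- the color of `ae` reappears away from `e`, on an edge meeting `ae`, `be` and `de`
  obtain ⟨p, hp, q, hq, hpq, hpe, hqe, h⟩ :=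
    exists_ne_ne_of_subset_colorsOn_erase (hall e he) ha he (Ne.symm hea)
  have h₁ := hG.meet_of_color_eq hP hp hq ha he hpq (Ne.symm hea) h
  have h₂ := hG.meet_of_color_eq hP hp hq hb he hpq (Ne.symm heb) (h.trans hbe')
  have h₃ := hG.meet_of_color_eq hP hp hq hd he hpq (Ne.symm hed) (h.trans hde')
  grind

lemma GallaiOn.sub_two_le_card_colorsOn (hP : NoMonoP4 c) (hG : GallaiOn c U) :
    #U - 2 ≤ #(colorsOn c U) := by
  induction U using Finset.strongInduction with
  | H U ih =>
  rcases lt_or_ge #U 4 with hU | hU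
  · rcases lt_or_ge #U 2 with h2 | h2
    · omega
    · have := (colorsOn_nonempty (c := c) h2).card_pos
      omega
  · obtain ⟨v, hv, k, hk, hkv⟩ := hG.exists_mem_colorsOn_notMem_erase hP hU
    have hlt : #(colorsOn c (U.erase v)) < #(colorsOn c U) :=
      card_lt_card ((ssubset_iff_of_subset (colorsOn_mono (erase_subset v U))).2 ⟨k, hk, hkv⟩)
    have := ih _ (erase_ssubset hv) (hG.mono (erase_subset v U))
    rw [card_erase_of_mem hv] at this
    omega

lemma GallaiOn.card_colorsOn_le (hG : GallaiOn c U) : #(colorsOn c U) ≤ #U - 1 := by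
  induction U using Finset.strongInduction with
  | H U ih =>
  rcases le_or_gt #U 1 with hU | hU
  · simp [colorsOn_eq_empty hU]
  · obtain ⟨v, hv⟩ : U.Nonempty := card_pos.1 (by omega)
    have hnew := card_colorsOn_le_erase_add_one (c := c) (v := v) fun p hp q hq => by
      by_contra hpq
      obtain ⟨a, ha, b, hb, -, -, hr⟩ := exists_rainbow_of_mem_sdiff_erase hp hq hpq
      exact hG v hv a (mem_of_mem_erase ha) b (mem_of_mem_erase hb) hr
    have := ih _ (erase_ssubset hv) (hG.mono (erase_subset v U))
    rw [card_erase_of_mem hv] at this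
    omega

end Gallai

section UpperBound

variable [DecidableEq V] [DecidableEq κ] {U : Finset V}

lemma colorsOn_subset_triangleColors (hK : NoRainbowK3e c) (hU : #U ≤ 4)
    (hr : IsRainbowTriangle c a b d) (ha : a ∈ U) (hb : b ∈ U) (hd : d ∈ U) :
    colorsOn c U ⊆ triangleColors c a b d := by
  intro k hk
  obtain ⟨u, hu, v, hv, huv, rfl⟩ := mem_colorsOn.1 hk
  by_cases hu' : u = a ∨ u = b ∨ u = d
  · exact hK.mem_triangleColors_of_mem hr hu' (Ne.symm huv)
  by_cases hv' : v = a ∨ v = b ∨ v = d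
  · exact color_swap c v u ▸ hK.mem_triangleColors_of_mem hr hv' huv
  have hsub : {a, b, d} ⊆ U := by simp [insert_subset_iff, *]
  have hcard := card_sdiff_of_subset hsub
  rw [card_eq_three.2 ⟨a, b, d, hr.ne₁₂, hr.ne₁₃, hr.ne₂₃, rfl⟩] at hcard
  exact absurd ((card_le_one (s := U \ {a, b, d})).1 (by omega) u (by simp [hu, hu']) v
    (by simp [hv, hv'])) huv

lemma NoRainbowK3e.eq_of_mem_sdiff_erase (hP : NoMonoP4 c) (hK : NoRainbowK3e c) (hU : 5 ≤ #U)
    {p q : κ} (hp : p ∈ colorsOn c U \ colorsOn c (U.erase v))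
    (hq : q ∈ colorsOn c U \ colorsOn c (U.erase v)) : p = q := by
  by_contra hpq
  obtain ⟨a, ha, b, hb, rfl, rfl, hr⟩ := exists_rainbow_of_mem_sdiff_erase hp hq hpq
  have hold : ∀ x ∈ U.erase v, ∀ y ∈ U.erase v, x ≠ y →
      c s(x, y) ≠ c s(v, a) ∧ c s(x, y) ≠ c s(v, b) := fun x hx y hy hxy =>
    ⟨fun h => (mem_sdiff.1 hp).2 (h ▸ mem_colorsOn_of_mem hx hy hxy),
      fun h => (mem_sdiff.1 hq).2 (h ▸ mem_colorsOn_of_mem hx hy hxy)⟩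
  have hout : 2 ≤ #(U \ {v, a, b}) := by
    have := le_card_sdiff {v, a, b} U
    have := card_le_three (a := v) (b := a) (c := b)
    omega
  obtain ⟨w, hw, w', hw', hww'⟩ := one_lt_card.1 hout
  simp only [mem_sdiff, mem_insert, mem_singleton, not_or] at hw hw'
  have hwv : w ∈ U.erase v := mem_erase.2 ⟨hw.2.1, hw.1⟩
  have hw'v : w' ∈ U.erase v := mem_erase.2 ⟨hw'.2.1, hw'.1⟩
  have haw : c s(a, w) = c s(a, b) := by
    rcases mem_triangleColors.1 (hK.incidentColorsIn₂ hr w hw.2.2.1) with h | h | h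
    · exact absurd h (hold a ha w hwv (Ne.symm hw.2.2.1)).1
    · exact absurd h (hold a ha w hwv (Ne.symm hw.2.2.1)).2
    · exact h
  have hbw' : c s(b, w') = c s(a, b) := by
    rcases mem_triangleColors.1 (hK.incidentColorsIn₃ hr w' hw'.2.2.2) with h | h | h
    · exact absurd h (hold b hb w' hw'v (Ne.symm hw'.2.2.2)).1
    · exact absurd h (hold b hb w' hw'v (Ne.symm hw'.2.2.2)).2
    · exact h
  exact hP.false (nodup_four hw.2.2.1 hw.2.2.2 hww' hr.ne₂₃ (Ne.symm hw'.2.2.1) (Ne.symm hw'.2.2.2))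
    ((color_swap c w a).trans haw) rfl hbw'

theorem card_colorsOn_le (hP : NoMonoP4 c) (hK : NoRainbowK3e c) (hU : 4 ≤ #U) :
    #(colorsOn c U) ≤ #U - 1 := by
  induction U using Finset.strongInduction with
  | H U ih =>
  rcases hU.eq_or_lt with hU | hU
  · by_cases hG : GallaiOn c U
    · exact hG.card_colorsOn_le
    simp only [GallaiOn, not_forall, not_not] at hG
    obtain ⟨a, ha, b, hb, d, hd, hr⟩ := hG
    have := card_le_card (colorsOn_subset_triangleColors hK hU.ge hr ha hb hd)
    rw [hr.card_triangleColors] at this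
    omega
  · obtain ⟨v, hv⟩ : U.Nonempty := card_pos.1 (by omega)
    have hnew := card_colorsOn_le_erase_add_one (c := c) (v := v) fun p hp q hq =>
      hK.eq_of_mem_sdiff_erase hP hU hp hq
    have := ih _ (erase_ssubset hv) (by rw [card_erase_of_mem hv]; omega)
    rw [card_erase_of_mem hv] at this
    omega

end UpperBound

section SixVertices

variable [DecidableEq κ] {c : Sym2 (Fin 6) → κ}
  (hT : ∀ i j : Fin 6, i ≠ j → c s(i, j) ∈ triangleColors c 3 4 5)
include hT

lemma not_noMonoP4_of_eq_c35 (h01 : c s(0, 1) = c s(3, 4)) (h30 : c s(3, 0) = c s(3, 5)) :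
    ¬ NoMonoP4 c := by
  intro hP
  have h40 : c s(4, 0) = c s(4, 5) := by
    rcases mem_triangleColors.1 (hT 4 0 (by decide)) with h | h | h
    · exact (hP.false (by decide) rfl h h01).elim
    · exact (hP.false (by decide) h ((color_swap c 0 3).trans h30) rfl).elim
    · exact h
  have h02 : c s(0, 2) = c s(3, 4) := by
    rcases mem_triangleColors.1 (hT 0 2 (by decide)) with h | h | h
    · exact h
    · exact (hP.false (by decide) (color_swap c 5 3) h30 h).elim
    · exact (hP.false (by decide) (color_swap c 5 4) h40 h).elim
  have h51 : c s(5, 1) = c s(4, 5) := by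
    rcases mem_triangleColors.1 (hT 5 1 (by decide)) with h | h | h
    · exact (hP.false (by decide) ((color_swap c 2 0).trans h02) h01
        ((color_swap c 1 5).trans h)).elim
    · exact (hP.false (by decide) ((color_swap c 0 3).trans h30) rfl h).elim
    · exact h
  exact hP.false (by decide) ((color_swap c 0 4).trans h40) rfl h51

lemma not_noMonoP4_of_eq_c45 (h01 : c s(0, 1) = c s(3, 4)) (h30 : c s(3, 0) = c s(4, 5))
    (h31 : c s(3, 1) = c s(4, 5)) : ¬ NoMonoP4 c := by
  intro hP
  have h40 : c s(4, 0) = c s(3, 5) := by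
    rcases mem_triangleColors.1 (hT 4 0 (by decide)) with h | h | h
    · exact (hP.false (by decide) rfl h h01).elim
    · exact h
    · exact (hP.false (by decide) h30 ((color_swap c 0 4).trans h) rfl).elim
  have h41 : c s(4, 1) = c s(3, 5) := by
    rcases mem_triangleColors.1 (hT 4 1 (by decide)) with h | h | h
    · exact (hP.false (by decide) rfl h ((color_swap c 1 0).trans h01)).elim
    · exact h
    · exact (hP.false (by decide) h31 ((color_swap c 1 4).trans h) rfl).elim
  have h50 : c s(5, 0) = c s(3, 4) := by
    rcases mem_triangleColors.1 (hT 5 0 (by decide)) with h | h | h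
    · exact h
    · exact (hP.false (by decide) ((color_swap c 1 4).trans h41) h40
        ((color_swap c 0 5).trans h)).elim
    · exact (hP.false (by decide) h30 ((color_swap c 0 5).trans h) (color_swap c 5 4)).elim
  have h12 : c s(1, 2) = c s(3, 5) := by
    rcases mem_triangleColors.1 (hT 1 2 (by decide)) with h | h | h
    · exact (hP.false (by decide) h50 h01 h).elim
    · exact h
    · exact (hP.false (by decide) ((color_swap c 0 3).trans h30) h31 h).elim
  exact hP.false (by decide) ((color_swap c 0 4).trans h40) h41 h12

lemma not_noMonoP4_of_eq_c34 (h01 : c s(0, 1) = c s(3, 4)) : ¬ NoMonoP4 c := by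
  intro hP
  have h30 : c s(3, 0) ≠ c s(3, 4) := fun h => hP.false (by decide) (color_swap c 4 3) h h01
  have h31 : c s(3, 1) ≠ c s(3, 4) := fun h =>
    hP.false (by decide) (color_swap c 4 3) h ((color_swap c 1 0).trans h01)
  rcases mem_triangleColors.1 (hT 3 0 (by decide)) with h | h | h
  · exact h30 h
  · exact not_noMonoP4_of_eq_c35 hT h01 h hP
  rcases mem_triangleColors.1 (hT 3 1 (by decide)) with h' | h' | h'
  · exact h31 h'
  · have hπ : (![1, 0, 2, 3, 4, 5] : Fin 6 → Fin 6).Injective := by decide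
    exact not_noMonoP4_of_eq_c35 (c := c ∘ Sym2.map ![1, 0, 2, 3, 4, 5])
      (fun i j hij => hT _ _ (hπ.ne hij)) ((color_swap c 1 0).trans h01) h' (hP.comp_map hπ)
  · exact not_noMonoP4_of_eq_c45 hT h01 h h' hP

/-- `R(P₄, P₄, P₄) ≤ 6`, for colorings of `K₆` that use the colors of a triangle. -/
lemma not_noMonoP4_fin_six : ¬ NoMonoP4 c := by
  rcases mem_triangleColors.1 (hT 0 1 (by decide)) with h | h | h
  · exact not_noMonoP4_of_eq_c34 hT h
  · have hπ : (![0, 1, 2, 3, 5, 4] : Fin 6 → Fin 6).Injective := by decide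
    intro hP
    refine not_noMonoP4_of_eq_c34 (c := c ∘ Sym2.map ![0, 1, 2, 3, 5, 4]) (fun i j hij => ?_) h
      (hP.comp_map hπ)
    show c s(_, _) ∈ triangleColors c 3 5 4
    rw [triangleColors_swap₂₃]
    exact hT _ _ (hπ.ne hij)
  · have hπ : (![0, 1, 2, 4, 5, 3] : Fin 6 → Fin 6).Injective := by decide
    intro hP
    refine not_noMonoP4_of_eq_c34 (c := c ∘ Sym2.map ![0, 1, 2, 4, 5, 3]) (fun i j hij => ?_) h
      (hP.comp_map hπ)
    show c s(_, _) ∈ triangleColors c 4 5 3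
    rw [triangleColors_rotate]
    exact hT _ _ (hπ.ne hij)

end SixVertices

section RainbowTriangle

variable [DecidableEq κ] {t w' : V} (hP : NoMonoP4 c) (hK : NoRainbowK3e c)
include hP hK

lemma NoRainbowK3e.color_eq_of_color_eq (hr : IsRainbowTriangle c u v t) (hwu : w ≠ u)
    (hwv : w ≠ v) (hwt : w ≠ t) (h : c s(w, u) = c s(w, v)) : c s(w, u) = c s(u, v) := by
  have hwu' := color_swap c w u
  rcases mem_triangleColors.1 (hK.incidentColorsIn₁ hr w hwu) with h' | h' | h'
  · exact hwu'.trans h'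
  · exact (hP.false (nodup_four hwv.symm hr.ne₁₂.symm hr.ne₂₃ hwu hwt hr.ne₁₃)
      ((color_swap c v w).trans (h.symm.trans (hwu'.trans h'))) (hwu'.trans h') rfl).elim
  · exact (hP.false (nodup_four hwu.symm hr.ne₁₂ hr.ne₁₃ hwv hwt hr.ne₂₃) h'
      (h.symm.trans (hwu'.trans h')) rfl).elim

lemma NoRainbowK3e.incidentColorsIn_of_ne (hr : IsRainbowTriangle c u v t) (hwu : w ≠ u)
    (hwv : w ≠ v) (hwt : w ≠ t) (hu : c s(w, u) ≠ c s(u, v)) (hv : c s(w, v) ≠ c s(u, v)) :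
    IncidentColorsIn c (triangleColors c u v t) w := by
  have hr' : IsRainbowTriangle c w u v :=
    ⟨fun h => hu (hK.color_eq_of_color_eq hP hr hwu hwv hwt h), hu, hv⟩
  intro e he
  rcases mem_triangleColors.1 (hK hr' he) with h | h | h <;> rw [h]
  · simpa only [color_swap c w u] using hK.incidentColorsIn₁ hr w hwu
  · simpa only [color_swap c w v] using hK.incidentColorsIn₂ hr w hwv
  · exact mem_triangleColors.2 (Or.inl rfl)

lemma NoRainbowK3e.incidentColorsIn_of_color_eq (hr : IsRainbowTriangle c u v t) (hwu : w ≠ u)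
    (hwv : w ≠ v) (hwt : w ≠ t) (hw'w : w' ≠ w) (hw'u : w' ≠ u) (hw'v : w' ≠ v)
    (h : c s(w, w') = c s(u, v)) : IncidentColorsIn c (triangleColors c u v t) w := by
  have hw' : c s(w', w) = c s(u, v) := (color_swap c w' w).trans h
  refine hK.incidentColorsIn_of_ne hP hr hwu hwv hwt (fun hu => ?_) (fun hv => ?_)
  · exact hP.false (nodup_four hw'w hw'u hw'v hwu hwv hr.ne₁₂) hw' hu rfl
  · exact hP.false (nodup_four hw'w hw'v hw'u hwv hwu hr.ne₁₂.symm) hw' hv (color_swap c v u)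

lemma NoRainbowK3e.incidentColorsIn_of_mem {x y z : V} (hr : IsRainbowTriangle c x y z)
    (hw : w ∉ [x, y, z]) (hw' : w' ∉ [x, y, z]) (hww' : w ≠ w')
    (h : c s(w, w') ∈ triangleColors c x y z) : IncidentColorsIn c (triangleColors c x y z) w := by
  simp only [List.mem_cons, List.not_mem_nil, or_false, not_or] at hw hw'
  obtain ⟨hwx, hwy, hwz⟩ := hw
  obtain ⟨hw'x, hw'y, hw'z⟩ := hw'
  rcases mem_triangleColors.1 h with h | h | h
  · exact hK.incidentColorsIn_of_color_eq hP hr hwx hwy hwz hww'.symm hw'x hw'y h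
  · rw [← triangleColors_swap₂₃]
    exact hK.incidentColorsIn_of_color_eq hP hr.swap₂₃ hwx hwz hwy hww'.symm hw'x hw'z h
  · rw [← triangleColors_rotate]
    exact hK.incidentColorsIn_of_color_eq hP hr.rotate hwy hwz hwx hww'.symm hw'y hw'z h

/-- If `ww'` had a triangle color, `w`, `w'` and `r` would see only triangle colors, and so would
all six vertices: impossible by `not_noMonoP4_fin_six`. -/
lemma NoRainbowK3e.color_notMem_triangleColors {x y z r : V} (hr : IsRainbowTriangle c x y z)
    (hw : w ∉ [x, y, z]) (hw' : w' ∉ [x, y, z]) (hr' : r ∉ [x, y, z]) (hww' : w ≠ w')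
    (hwr : w ≠ r) (hw'r : w' ≠ r) : c s(w, w') ∉ triangleColors c x y z := by
  intro h
  have sw := hK.incidentColorsIn_of_mem hP hr hw hw' hww' h
  have sw' := hK.incidentColorsIn_of_mem hP hr hw' hw hww'.symm (color_swap c w' w ▸ h)
  have sr := hK.incidentColorsIn_of_mem hP hr hr' hw (Ne.symm hwr)
    (color_swap c r w ▸ sw r hwr.symm)
  have hg : (![w, w', r, x, y, z] : Fin 6 → V).Injective := by
    refine List.nodup_ofFn.1 (?_ : [w, w', r, x, y, z].Nodup)
    simp only [List.mem_cons, List.not_mem_nil, or_false, not_or] at hw hw' hr'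
    simp [*, hr.ne₁₂, hr.ne₁₃, hr.ne₂₃]
  have sat : ∀ i, IncidentColorsIn c (triangleColors c x y z) (![w, w', r, x, y, z] i) := by
    intro i
    fin_cases i
    exacts [sw, sw', sr, hK.incidentColorsIn₁ hr, hK.incidentColorsIn₂ hr, hK.incidentColorsIn₃ hr]
  exact not_noMonoP4_fin_six (c := c ∘ Sym2.map ![w, w', r, x, y, z])
    (fun i j hij => sat i _ (hg.ne hij).symm) (hP.comp_map hg)

lemma NoRainbowK3e.gallaiOn_of_forall_notMem {x y z : V} (hr : IsRainbowTriangle c x y z)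
    {W : Finset V} (hW : ∀ a ∈ W, a ∉ [x, y, z]) : GallaiOn c W := by
  intro a ha b hb d hd hr'
  have hxa : x ≠ a := fun h => hW a ha (by simp [h])
  have hax : c s(a, x) ∈ triangleColors c x y z :=
    color_swap c x a ▸ hK.incidentColorsIn₁ hr a hxa.symm
  rcases mem_triangleColors.1 (hK.incidentColorsIn₁ hr' x hxa) with h | h | h <;> rw [h] at hax
  · exact hK.color_notMem_triangleColors hP hr (hW a ha) (hW b hb) (hW d hd) hr'.ne₁₂ hr'.ne₁₃
      hr'.ne₂₃ hax
  · exact hK.color_notMem_triangleColors hP hr (hW a ha) (hW d hd) (hW b hb) hr'.ne₁₃ hr'.ne₁₂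
      hr'.ne₂₃.symm hax
  · exact hK.color_notMem_triangleColors hP hr (hW b hb) (hW d hd) (hW a ha) hr'.ne₂₃
      hr'.ne₁₂.symm hr'.ne₁₃.symm hax

end RainbowTriangle

section LowerBound

variable [DecidableEq V] [DecidableEq κ] {x y z : V}

lemma NoRainbowK3e.disjoint_triangleColors_colorsOn (hP : NoMonoP4 c) (hK : NoRainbowK3e c)
    (hr : IsRainbowTriangle c x y z) {W : Finset V} (hW : ∀ a ∈ W, a ∉ [x, y, z]) (hW3 : 3 ≤ #W) :
    Disjoint (triangleColors c x y z) (colorsOn c W) := by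
  refine disjoint_right.2 fun k hk hkT => ?_
  obtain ⟨a, ha, b, hb, hab, rfl⟩ := mem_colorsOn.1 hk
  obtain ⟨r, hr', hrab⟩ := exists_mem_notMem_of_card_lt_card (t := W)
    ((card_le_two (a := a) (b := b)).trans_lt (by omega))
  simp only [mem_insert, mem_singleton, not_or] at hrab
  exact hK.color_notMem_triangleColors hP hr (hW a ha) (hW b hb) (hW r hr') hab
    (Ne.symm hrab.1) (Ne.symm hrab.2) hkT

theorem sub_two_le_card_colorsOn (hP : NoMonoP4 c) (hK : NoRainbowK3e c) (U : Finset V) :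
    #U - 2 ≤ #(colorsOn c U) := by
  by_cases hG : GallaiOn c U
  · exact hG.sub_two_le_card_colorsOn hP
  simp only [GallaiOn, not_forall, not_not] at hG
  obtain ⟨x, hx, y, hy, z, hz, hr⟩ := hG
  have hTU := hr.triangleColors_subset hx hy hz
  have hW : #U - 3 ≤ #(U \ {x, y, z}) :=
    (Nat.sub_le_sub_left card_le_three _).trans (le_card_sdiff _ _)
  have hout : ∀ a ∈ U \ {x, y, z}, a ∉ [x, y, z] := fun a ha => by
    simpa using (mem_sdiff.1 ha).2
  rcases lt_or_ge #(U \ {x, y, z}) 3 with hW3 | hW3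
  · have := card_le_card hTU
    rw [hr.card_triangleColors] at this
    omega
  have := (hK.gallaiOn_of_forall_notMem hP hr hout).sub_two_le_card_colorsOn hP
  have := card_le_card (union_subset hTU (colorsOn_mono (sdiff_subset : U \ {x, y, z} ⊆ U)))
  rw [card_union_of_disjoint (hK.disjoint_triangleColors_colorsOn hP hr hout hW3),
    hr.card_triangleColors] at this
  omega

end LowerBound

section CompleteGraph

variable {n : ℕ} {c : Sym2 (Fin n) → ℕ} {a b d e : Fin n} {ι : Type*} {H : SimpleGraph ι}

lemma edgeColors_eq_colorsOn (c : Sym2 (Fin n) → ℕ) : edgeColors c = colorsOn c univ := by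
  ext k
  simp only [edgeColors, mem_image, mem_filter, mem_univ, true_and, mem_colorsOn]
  constructor
  · rintro ⟨e, he, rfl⟩
    induction e using Sym2.ind with
    | _ a b => exact ⟨a, b, by simpa using he, rfl⟩
  · rintro ⟨a, b, hab, rfl⟩
    exact ⟨s(a, b), by simpa using hab, rfl⟩

lemma noMonoP4_iff : NoMonoP4 c ↔ ¬ HasMonoCopy c (pathGraph 4) := by
  constructor
  · rintro hP ⟨f, k, hf⟩
    exact hP.false ((by decide : [(0 : Fin 4), 1, 2, 3].Nodup).map f.injective)
      (hf 0 1 (by simp [pathGraph_adj])) (hf 1 2 (by simp [pathGraph_adj]))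
      (hf 2 3 (by simp [pathGraph_adj]))
  · intro h a b d e hd h₁
    by_contra! h₂
    refine h ⟨⟨![a, b, d, e], List.nodup_ofFn.1 hd⟩, c s(b, d), fun u v huv => ?_⟩
    rw [pathGraph_adj] at huv
    fin_cases u <;> fin_cases v <;> simp at huv ⊢
    all_goals first
      | exact h₁
      | exact h₂.symm
      | exact (color_swap c _ _).trans h₁
      | exact (color_swap c _ _).trans h₂.symm
      | exact color_swap c _ _

lemma HasRainbowCopy.exists_isRainbowTriangle (h : HasRainbowCopy c H) {i j k : ι} (hij : H.Adj i j)
    (hik : H.Adj i k) (hjk : H.Adj j k) : ∃ a b d, IsRainbowTriangle c a b d := by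
  obtain ⟨f, hf⟩ := h
  refine ⟨f i, f j, f k, fun h' => ?_, fun h' => ?_, fun h' => ?_⟩
  · simpa [hij.ne, hik.ne, hjk.ne] using hf _ _ _ _ hij hik h'
  · simpa [hij.ne, hik.ne, hjk.ne] using hf _ _ _ _ hij hjk h'
  · simpa [hij.ne, hik.ne, hjk.ne] using hf _ _ _ _ hik hjk h'

lemma hasRainbowCopy_of_injOn (f : ι ↪ Fin n) (hf : Set.InjOn (fun e => c (e.map f)) H.edgeSet) :
    HasRainbowCopy c H :=
  ⟨f, fun _ _ _ _ huv hu'v' h => hf huv hu'v' h⟩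

lemma IsRainbowTriangle.hasRainbowCopy (h : IsRainbowTriangle c a b d) :
    HasRainbowCopy c (completeGraph (Fin 3)) := by
  refine hasRainbowCopy_of_injOn ⟨![a, b, d], List.nodup_ofFn.1 (?_ : [a, b, d].Nodup)⟩ ?_
  · simp [h.ne₁₂, h.ne₁₃, h.ne₂₃]
  · have hE : (completeGraph (Fin 3)).edgeSet ⊆ {s(0, 1), s(0, 2), s(1, 2)} := by
      intro e he
      induction e using Sym2.ind with
      | _ u v => fin_cases u <;> fin_cases v <;> simp_all
    refine Set.InjOn.mono hE ?_
    obtain ⟨h₁, h₂, h₃⟩ := h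
    simp [Set.injOn_insert, h₃, h₁.symm, h₂.symm]

lemma hasRainbowCopy_K3e (h : IsRainbowTriangle c a b d) (heb : e ≠ b) (hed : e ≠ d) (hea : e ≠ a)
    (hae : c s(a, e) ∉ triangleColors c a b d) : HasRainbowCopy c K3e := by
  refine hasRainbowCopy_of_injOn ⟨![a, b, d, e], List.nodup_ofFn.1 (?_ : [a, b, d, e].Nodup)⟩ ?_
  · simp [h.ne₁₂, h.ne₁₃, h.ne₂₃, hea.symm, heb.symm, hed.symm]
  · have hE : K3e.edgeSet ⊆ {s(0, 1), s(0, 2), s(1, 2), s(0, 3)} := by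
      rw [K3e, edgeSet_fromEdgeSet]
      exact Set.sdiff_subset
    refine Set.InjOn.mono hE ?_
    obtain ⟨h₁, h₂, h₃⟩ := h
    simp only [mem_triangleColors, not_or] at hae
    obtain ⟨h₄, h₅, h₆⟩ := hae
    simp [Set.injOn_insert, h₄, h₅, h₁.symm, h₂.symm, h₃.symm, Ne.symm h₆]

lemma NoRainbowK3e.of_not_hasRainbowCopy (h : ¬ HasRainbowCopy c K3e) : NoRainbowK3e c := by
  intro a b d e hr hea
  by_contra hae
  have heb : e ≠ b := by rintro rfl; exact hae (mem_triangleColors.2 (Or.inl rfl))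
  have hed : e ≠ d := by rintro rfl; exact hae (mem_triangleColors.2 (Or.inr (Or.inl rfl)))
  exact h (hasRainbowCopy_K3e hr heb hed hea hae)

def minColoring (n m : ℕ) : Sym2 (Fin n) → ℕ :=
  Sym2.lift ⟨fun a b => min (min (a : ℕ) b) m, fun a b => by simp only [min_comm (a : ℕ)]⟩

lemma minColoring_mk (m : ℕ) (a b : Fin n) : minColoring n m s(a, b) = min (min (a : ℕ) b) m :=
  rfl

lemma not_isRainbowTriangle_minColoring (m : ℕ) (a b d : Fin n) :
    ¬ IsRainbowTriangle (minColoring n m) a b d := by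
  simp only [IsRainbowTriangle, minColoring_mk]
  omega

lemma noMonoP4_minColoring {m : ℕ} (hm : n ≤ m + 3) : NoMonoP4 (minColoring n m) := by
  intro a b d e hd h₁ h₂
  simp only [List.nodup_cons, List.mem_cons, List.not_mem_nil, Fin.ext_iff, minColoring_mk] at *
  omega

lemma card_edgeColors_minColoring {m : ℕ} (hm : m + 2 ≤ n) :
    #(edgeColors (minColoring n m)) = m + 1 := by
  rw [edgeColors_eq_colorsOn, ← card_range (m + 1)]
  congr 1
  ext k
  simp only [mem_colorsOn, mem_univ, true_and, mem_range, minColoring_mk]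
  constructor
  · rintro ⟨a, b, -, rfl⟩
    omega
  · intro hk
    exact ⟨⟨k, by omega⟩, ⟨k + 1, by omega⟩, by simp [Fin.ext_iff], by simp; omega⟩

theorem mixedSpectrum_pathGraph_four (hn : 4 ≤ n)
    (hK : ∀ c : Sym2 (Fin n) → ℕ, ¬ HasRainbowCopy c H → NoRainbowK3e c)
    (hmin : ∀ m, ¬ HasRainbowCopy (minColoring n m) H) :
    mixedSpectrum n (pathGraph 4) H = {n - 2, n - 1} := by
  ext k
  simp only [mixedSpectrum, GoodColoring, Set.mem_ofPred_eq, Set.mem_insert_iff,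
    Set.mem_singleton_iff]
  constructor
  · rintro ⟨c, ⟨hmono, hrainbow⟩, rfl⟩
    have hP := noMonoP4_iff.2 hmono
    have h₁ := sub_two_le_card_colorsOn hP (hK c hrainbow) univ
    have h₂ := card_colorsOn_le hP (hK c hrainbow) (U := univ) (by simpa using hn)
    rw [card_univ, Fintype.card_fin] at h₁ h₂
    rw [edgeColors_eq_colorsOn]
    omega
  · have hgood : ∀ m, n ≤ m + 3 → m + 2 ≤ n → ∃ c : Sym2 (Fin n) → ℕ,
        (¬ HasMonoCopy c (pathGraph 4) ∧ ¬ HasRainbowCopy c H) ∧ #(edgeColors c) = m + 1 :=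
      fun m h₁ h₂ => ⟨minColoring n m, ⟨noMonoP4_iff.1 (noMonoP4_minColoring h₁), hmin m⟩,
        card_edgeColors_minColoring h₂⟩
    rintro (rfl | rfl)
    · simpa [show n - 3 + 1 = n - 2 by omega] using hgood (n - 3) (by omega) (by omega)
    · simpa [show n - 2 + 1 = n - 1 by omega] using hgood (n - 2) (by omega) (by omega)

end CompleteGraph

end EdgeColoring

open EdgeColoring

/-- `S(n; P_4, K_3) = S(n; P_4, K_3+e) = {n-2, n-1}` for `n ≥ 4`. -/
theorem stmt_9 (n : ℕ) (hn : 4 ≤ n) :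
    mixedSpectrum n (pathGraph 4) (completeGraph (Fin 3)) = {n-2, n-1} ∧
    mixedSpectrum n (pathGraph 4) K3e = {n-2, n-1} := by
  refine ⟨mixedSpectrum_pathGraph_four hn (fun c h a b d e hr _ => ?_) (fun m h => ?_),
    mixedSpectrum_pathGraph_four hn (fun c => NoRainbowK3e.of_not_hasRainbowCopy) (fun m h => ?_)⟩
  · exact absurd hr.hasRainbowCopy h
  · obtain ⟨a, b, d, hr⟩ := h.exists_isRainbowTriangle (i := 0) (j := 1) (k := 2)
      (by decide) (by decide) (by decide)
    exact not_isRainbowTriangle_minColoring m a b d hr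
  · obtain ⟨a, b, d, hr⟩ := h.exists_isRainbowTriangle (i := 0) (j := 1) (k := 2)
      (by simp [K3e]) (by simp [K3e]) (by simp [K3e])
    exact not_isRainbowTriangle_minColoring m a b d hr
end

section
/- Define the coloring c of K_10 on vertices v_1,…,v_10 by c(v_i v_j) = i for 1 ≤ i ≤ 7, i < j, and c(v_8 v_9) = c(v_8 v_10) = c(v_9 v_10) = 8. Then c uses exactly 8 colors, contains no rainbow triangle (hence no rainbow K_3+e), and contains no monochromatic C_4. Hence 8 ∈ S(10; C_4, K_3+e). -/
open SimpleGraph Finset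

universe u v

variable {α : Type u} {β : Type v}

/-- The explicit 8-coloring `c` of `K_10`: vertex `i` (`i ≤ 6`, representing `v_{i+1}`)
sends color `i+1` to all later vertices, and the triangle on `{7,8,9}` gets color 8. -/
def c16 : Sym2 (Fin 10) → ℕ :=
  Sym2.lift ⟨fun i j => if min (i : ℕ) (j : ℕ) ≤ 6 then min (i : ℕ) (j : ℕ) + 1 else 8,
    fun i j => by simp [Nat.min_comm]⟩

lemma c16_eq (x y : Fin 10) :
    c16 s(x, y) = if min (x : ℕ) (y : ℕ) ≤ 6 then min (x : ℕ) (y : ℕ) + 1 else 8 := rfl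

lemma c16_min (x y z : Fin 10) (h1 : (x : ℕ) ≤ y) (h2 : (x : ℕ) ≤ z) :
    c16 s(x, y) = c16 s(x, z) := by
  rw [c16_eq, c16_eq, Nat.min_eq_left h1, Nat.min_eq_left h2]

lemma triangle_rainbow {m : ℕ} (H : SimpleGraph (Fin m)) (a b c : Fin m)
    (hab : H.Adj a b) (hac : H.Adj a c) (hbc : H.Adj b c)
    (hne1 : s(a,b) ≠ s(a,c)) (hne2 : s(b,a) ≠ s(b,c)) (hne3 : s(c,a) ≠ s(c,b)) :
    ¬ HasRainbowCopy c16 H := by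
  rintro ⟨f, hf⟩
  rcases le_total (f a : ℕ) (f b) with h1 | h1 <;>
    rcases le_total (f a : ℕ) (f c) with h2 | h2 <;>
      rcases le_total (f b : ℕ) (f c) with h3 | h3 <;>
  first
  | exact hne1 (hf a b a c hab hac (c16_min _ _ _ (by omega) (by omega)))
  | exact hne2 (hf b a b c hab.symm hbc (c16_min _ _ _ (by omega) (by omega)))
  | exact hne3 (hf c a c b hac.symm hbc.symm (c16_min _ _ _ (by omega) (by omega)))

lemma no_mono_C4 : ¬ HasMonoCopy c16 C4g := by
  rintro ⟨f, k, hf⟩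
  have h01 := hf 0 1 (by simp [C4g])
  have h12 := hf 1 2 (by simp [C4g])
  have h23 := hf 2 3 (by simp [C4g])
  have h30 := hf 3 0 (by simp [C4g])
  rw [c16_eq] at h01 h12 h23 h30
  have d02 : (f 0 : ℕ) ≠ f 2 := fun h => by
    exact absurd (f.injective (Fin.val_injective h)) (by decide)
  have d13 : (f 1 : ℕ) ≠ f 3 := fun h => by
    exact absurd (f.injective (Fin.val_injective h)) (by decide)
  have d01 : (f 0 : ℕ) ≠ f 1 := fun h => by
    exact absurd (f.injective (Fin.val_injective h)) (by decide)
  have d12 : (f 1 : ℕ) ≠ f 2 := fun h => by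
    exact absurd (f.injective (Fin.val_injective h)) (by decide)
  have d23 : (f 2 : ℕ) ≠ f 3 := fun h => by
    exact absurd (f.injective (Fin.val_injective h)) (by decide)
  have d30 : (f 3 : ℕ) ≠ f 0 := fun h => by
    exact absurd (f.injective (Fin.val_injective h)) (by decide)
  have b0 := (f 0).is_lt
  have b1 := (f 1).is_lt
  have b2 := (f 2).is_lt
  have b3 := (f 3).is_lt
  split_ifs at h01 h12 h23 h30 <;> omega

/-- `c16` uses exactly 8 colors, has no rainbow triangle, no rainbow `K_3+e`, and no
monochromatic `C_4`; hence `8 ∈ S(10; C_4, K_3+e)`. -/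
theorem stmt_16 :
    (edgeColors c16).card = 8 ∧ ¬ HasRainbowCopy c16 (completeGraph (Fin 3)) ∧
    ¬ HasRainbowCopy c16 K3e ∧ ¬ HasMonoCopy c16 C4g ∧
    8 ∈ mixedSpectrum 10 C4g K3e := by
  have hK3e : ¬ HasRainbowCopy c16 K3e := by
    refine triangle_rainbow K3e 0 1 2 ?_ ?_ ?_ (by decide) (by decide) (by decide) <;>
      simp [K3e]
  have hC4 := no_mono_C4
  refine ⟨by decide, ?_, hK3e, hC4, c16, ⟨hC4, hK3e⟩, by decide⟩
  exact triangle_rainbow _ 0 1 2 (by simp [completeGraph]) (by simp [completeGraph]) (by simp [completeGraph])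
    (by simp [completeGraph]) (by simp [completeGraph]) (by simp [completeGraph])
end

section
/- Define the coloring c' of K_10 on vertices v_1,…,v_10 by c'(v_i v_j) = i for 1 ≤ i ≤ 5, i < j; c'(v_6 v_7) = c'(v_7 v_8) = c'(v_8 v_9) = c'(v_9 v_10) = c'(v_10 v_6) = 6; and all remaining edges get color 7. Then c' uses exactly 7 colors, contains no rainbow triangle (hence no rainbow K_3+e) and no monochromatic C_4. Hence 7 ∈ S(10; C_4, K_3+e). -/
open SimpleGraph Finset

universe u v

variable {α : Type u} {β : Type v}

/-- The explicit 7-coloring `c'` of `K_10`: vertex `i` (`i ≤ 4`) sends color `i+1`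
to all later vertices; on `{5,…,9}` the 5-cycle (differences `1` and `4`) gets color 6
and the 5 chords get color 7. -/
def c17 : Sym2 (Fin 10) → ℕ :=
  Sym2.lift ⟨fun i j =>
    if min (i : ℕ) (j : ℕ) ≤ 4 then min (i : ℕ) (j : ℕ) + 1
    else if max (i : ℕ) (j : ℕ) - min (i : ℕ) (j : ℕ) = 1 ∨
            max (i : ℕ) (j : ℕ) - min (i : ℕ) (j : ℕ) = 4 then 6 else 7,
    fun i j => by simp [Nat.min_comm, Nat.max_comm]⟩

instance : DecidableRel K3e.Adj := fun a b =>
  decidable_of_iff ((s(a,b) = s(0,1) ∨ s(a,b) = s(0,2) ∨ s(a,b) = s(1,2) ∨ s(a,b) = s(0,3)) ∧ a ≠ b)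
    (by rw [K3e]; simp [fromEdgeSet_adj, Set.mem_insert_iff])

instance : DecidableRel C4g.Adj := fun a b =>
  decidable_of_iff ((s(a,b) = s(0,1) ∨ s(a,b) = s(1,2) ∨ s(a,b) = s(2,3) ∨ s(a,b) = s(3,0)) ∧ a ≠ b)
    (by rw [C4g]; simp [fromEdgeSet_adj, Set.mem_insert_iff])

set_option maxHeartbeats 4000000 in
lemma lemA : ∀ x y z : Fin 10, x ≠ y → x ≠ z → y ≠ z →
    (c17 s(x,y) = c17 s(x,z) ∨ c17 s(x,y) = c17 s(y,z) ∨ c17 s(x,z) = c17 s(y,z)) := by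
  decide

set_option maxHeartbeats 4000000 in
set_option maxRecDepth 10000 in
lemma lemB : ∀ a b c d : Fin 10, a ≠ b → a ≠ c → a ≠ d → b ≠ c → b ≠ d → c ≠ d →
    ¬(c17 s(a,b) = c17 s(b,c) ∧ c17 s(b,c) = c17 s(c,d) ∧ c17 s(c,d) = c17 s(d,a)) := by
  decide

instance : DecidableRel (completeGraph (Fin 3)).Adj := fun a b =>
  decidable_of_iff (a ≠ b) (by simp [completeGraph])

lemma noRainbowTri : ¬ HasRainbowCopy c17 (completeGraph (Fin 3)) := by
  rintro ⟨f, hf⟩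
  have h01 : f 0 ≠ f 1 := f.injective.ne (by decide)
  have h02 : f 0 ≠ f 2 := f.injective.ne (by decide)
  have h12 : f 1 ≠ f 2 := f.injective.ne (by decide)
  rcases lemA (f 0) (f 1) (f 2) h01 h02 h12 with h | h | h
  · exact absurd (hf 0 1 0 2 (by decide) (by decide) h) (by decide)
  · exact absurd (hf 0 1 1 2 (by decide) (by decide) h) (by decide)
  · exact absurd (hf 0 2 1 2 (by decide) (by decide) h) (by decide)

lemma noRainbowK3e : ¬ HasRainbowCopy c17 K3e := by
  rintro ⟨f, hf⟩
  apply noRainbowTri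
  refine ⟨⟨fun i => f i.castSucc, fun a b h => Fin.castSucc_injective _ (f.injective h)⟩, ?_⟩
  intro u v u' v' huv hu'v' hcol
  have adj : ∀ a b : Fin 3, a ≠ b → K3e.Adj a.castSucc b.castSucc := by decide
  have key := hf u.castSucc v.castSucc u'.castSucc v'.castSucc
    (adj u v huv.ne) (adj u' v' hu'v'.ne) hcol
  rw [Sym2.eq_iff] at key ⊢
  rcases key with ⟨h1, h2⟩ | ⟨h1, h2⟩
  · exact Or.inl ⟨Fin.castSucc_injective _ h1, Fin.castSucc_injective _ h2⟩
  · exact Or.inr ⟨Fin.castSucc_injective _ h1, Fin.castSucc_injective _ h2⟩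

lemma noMonoC4 : ¬ HasMonoCopy c17 C4g := by
  rintro ⟨f, k, h⟩
  have ne : ∀ i j : Fin 4, i ≠ j → f i ≠ f j := fun i j hij => f.injective.ne hij
  refine lemB (f 0) (f 1) (f 2) (f 3) (ne 0 1 (by decide)) (ne 0 2 (by decide))
    (ne 0 3 (by decide)) (ne 1 2 (by decide)) (ne 1 3 (by decide)) (ne 2 3 (by decide))
    ⟨?_, ?_, ?_⟩
  · rw [h 0 1 (by decide), h 1 2 (by decide)]
  · rw [h 1 2 (by decide), h 2 3 (by decide)]
  · rw [h 2 3 (by decide), h 3 0 (by decide)]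

set_option maxHeartbeats 1000000 in
lemma cardC17 : (edgeColors c17).card = 7 := by decide
/-- `c17` uses exactly 7 colors, has no rainbow triangle, no rainbow `K_3+e`, and no
monochromatic `C_4`; hence `7 ∈ S(10; C_4, K_3+e)`. -/
theorem stmt_17 :
    (edgeColors c17).card = 7 ∧ ¬ HasRainbowCopy c17 (completeGraph (Fin 3)) ∧
    ¬ HasRainbowCopy c17 K3e ∧ ¬ HasMonoCopy c17 C4g ∧
    7 ∈ mixedSpectrum 10 C4g K3e := by
  exact ⟨cardC17, noRainbowTri, noRainbowK3e, noMonoC4, ⟨c17, ⟨noMonoC4, noRainbowK3e⟩, cardC17⟩⟩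
end
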